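/- Let d₁, d₂ ∈ M be ramified over A, with ramifiers a₁ and a₂ respectively, such that G(d₁/A) = G(d₂/A) and Δ(d₁ − a₁) < Δ(d₂ − a₂). Then d₁ + d₂ is ramified over A, a₁ + a₂ is a ramifier of d₁ + d₂ over A, Δ((d₁ + d₂) − (a₁ + a₂)) = Δ(d₂ − a₂), and Stab(d₁ + d₂/A) = Stab(d₂/A) (hence G(d₁ + d₂/A) = G(d₂/A)). -/

import Mathlib

/-- `c` and `d` realize the same cut over the subgroup `A`. -/
def SameCut {M : Type*} [AddCommGroup M] [LinearOrder M] [IsOrderedAddMonoid M] (A : AddSubgroup M) (c d : M) : Prop :=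
  ∀ a ∈ A, ((a ≤ c ↔ a ≤ d) ∧ (c ≤ a ↔ d ≤ a))

/-- `Stab(d/A)`: elements `a ∈ A` such that `d + a` and `d` realize the same cut over `A`. -/
def Stab {M : Type*} [AddCommGroup M] [LinearOrder M] [IsOrderedAddMonoid M] (A : AddSubgroup M) (d : M) : Set M :=
  {a | a ∈ A ∧ SameCut A (d + a) d}

open Classical in
/-- `G(d/A)`. -/
def Gset {M : Type*} [AddCommGroup M] [LinearOrder M] [IsOrderedAddMonoid M] (A : AddSubgroup M) (d : M) : Set M :=
  if d ∈ A then ({0} : Set M)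
  else {x | ∀ a ∈ A, a ∉ Stab A d → (-|a| < x ∧ x < |a|)}

/-- `H(d/A)`. -/
def Hset {M : Type*} [AddCommGroup M] [LinearOrder M] [IsOrderedAddMonoid M] (A : AddSubgroup M) (d : M) : Set M :=
  {x | ∃ a ∈ Stab A d, |x| ≤ |a|}

/-- `Δ(x) ≤ Δ(y)`: `|x| ≤ n • |y|` for some natural number `n`. -/
def DeltaLe {M : Type*} [AddCommGroup M] [LinearOrder M] [IsOrderedAddMonoid M] (x y : M) : Prop :=
  ∃ n : ℕ, |x| ≤ n • |y|

/-- `Δ(x) = Δ(y)`. -/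
def DeltaEq {M : Type*} [AddCommGroup M] [LinearOrder M] [IsOrderedAddMonoid M] (x y : M) : Prop :=
  DeltaLe x y ∧ DeltaLe y x

/-- `Δ(x) < Δ(y)`. -/
def DeltaLt {M : Type*} [AddCommGroup M] [LinearOrder M] [IsOrderedAddMonoid M] (x y : M) : Prop :=
  DeltaLe x y ∧ ¬ DeltaLe y x

/-- `Δ(x) ∈ Δ(A)`. -/
def DeltaMem {M : Type*} [AddCommGroup M] [LinearOrder M] [IsOrderedAddMonoid M] (x : M) (A : AddSubgroup M) : Prop :=
  ∃ a ∈ A, DeltaEq x a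

/-- `a` is a ramifier of `d` over `A`: `a ∈ A` and `Δ(d − a) ∉ Δ(A)`. -/
def IsRamifier {M : Type*} [AddCommGroup M] [LinearOrder M] [IsOrderedAddMonoid M] (A : AddSubgroup M) (d a : M) : Prop :=
  a ∈ A ∧ ¬ DeltaMem (d - a) A

/-- `d` is ramified over `A` if it admits a ramifier. -/
def Ramified {M : Type*} [AddCommGroup M] [LinearOrder M] [IsOrderedAddMonoid M] (A : AddSubgroup M) (d : M) : Prop :=
  ∃ a, IsRamifier A d a

/-- `d` is cut-independent from `B` over `A`: every closed interval with bounds in `B`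
containing `d` contains a point of `A`. -/
def CutIndep {M : Type*} [AddCommGroup M] [LinearOrder M] [IsOrderedAddMonoid M] (A B : AddSubgroup M) (d : M) : Prop :=
  ∀ b₁ ∈ B, ∀ b₂ ∈ B, b₁ ≤ d → d ≤ b₂ → ∃ a ∈ A, b₁ ≤ a ∧ a ≤ b₂

/-!
Since `Δ(d₁ − a₁) < Δ(d₂ − a₂)`, the difference `(d₁ + d₂) − (a₁ + a₂)` has the same archimedean
class as `d₂ − a₂`, which is not a class of `A`. For any ramifier `a` of `d`, the stabilizer is
`Stab(d/A) = {b ∈ A : Δ(b) < Δ(d − a)}`: if `Δ(d − a) ≤ Δ(b)`, iterating the translation by `|b|`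
pushes `d` past a bound `a + n|b| ∈ A`; if `Δ(b) < Δ(d − a)`, no point of `A` lies within `|b|` of
`d`, since otherwise `Δ(d − a)` would be the class of an element of `A`. Hence the stabilizer only
depends on `Δ(d − a)`.
-/

section Delta

variable {M : Type*} [AddCommGroup M] [LinearOrder M] [IsOrderedAddMonoid M] {x y z : M}

theorem DeltaLe.refl (x : M) : DeltaLe x x := ⟨1, by simp⟩

theorem DeltaLe.trans (hxy : DeltaLe x y) (hyz : DeltaLe y z) : DeltaLe x z := by
  obtain ⟨m, hm⟩ := hxy
  obtain ⟨n, hn⟩ := hyz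
  exact ⟨m * n, hm.trans (by rw [mul_smul]; exact nsmul_le_nsmul_right hn m)⟩

theorem DeltaLe.of_abs_le (h : |x| ≤ |y|) : DeltaLe x y := ⟨1, by simpa using h⟩

theorem DeltaLe.add (hx : DeltaLe x z) (hy : DeltaLe y z) : DeltaLe (x + y) z := by
  obtain ⟨m, hm⟩ := hx
  obtain ⟨n, hn⟩ := hy
  exact ⟨m + n, (abs_add_le x y).trans (by rw [add_nsmul]; exact add_le_add hm hn)⟩

theorem DeltaEq.refl (x : M) : DeltaEq x x := ⟨.refl x, .refl x⟩

theorem DeltaEq.deltaLe_iff_left (h : DeltaEq x y) : DeltaLe x z ↔ DeltaLe y z :=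
  ⟨h.2.trans, h.1.trans⟩

theorem DeltaEq.trans (hxy : DeltaEq x y) (hyz : DeltaEq y z) : DeltaEq x z :=
  ⟨hxy.1.trans hyz.1, hyz.2.trans hxy.2⟩

theorem deltaEq_add_of_not_deltaLe (h : ¬ DeltaLe y x) : DeltaEq (x + y) y := by
  have h2x : 2 • |x| < |y| := lt_of_not_ge fun hle => h ⟨2, hle⟩
  have := abs_add_le x y
  have := abs_sub_abs_le_abs_sub y (-x)
  exact ⟨⟨2, by grind⟩, ⟨2, by grind⟩⟩

end Delta

section Cut

variable {M : Type*} [AddCommGroup M] [LinearOrder M] [IsOrderedAddMonoid M] {A : AddSubgroup M}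
  {b c d : M}

theorem SameCut.refl (c : M) : SameCut A c c := fun _ _ => ⟨Iff.rfl, Iff.rfl⟩

theorem SameCut.symm (h : SameCut A c d) : SameCut A d c :=
  fun a ha => ⟨(h a ha).1.symm, (h a ha).2.symm⟩

theorem SameCut.trans {e : M} (hcd : SameCut A c d) (hde : SameCut A d e) : SameCut A c e :=
  fun a ha => ⟨(hcd a ha).1.trans (hde a ha).1, (hcd a ha).2.trans (hde a ha).2⟩

theorem SameCut.add_right (h : SameCut A c d) (hb : b ∈ A) : SameCut A (c + b) (d + b) := by
  intro a ha
  have := h (a - b) (A.sub_mem ha hb)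
  simp only [sub_le_iff_le_add, le_sub_iff_add_le] at this
  exact this

theorem SameCut.add_nsmul (hb : b ∈ A) (h : SameCut A (d + b) d) (k : ℕ) :
    SameCut A (d + k • b) d := by
  induction k with
  | zero => simpa using SameCut.refl d
  | succ k ih =>
    have hstep := h.add_right (A.nsmul_mem hb k)
    rw [add_right_comm] at hstep
    rw [succ_nsmul, ← add_assoc]
    exact hstep.trans ih

theorem sameCut_add_of_forall_abs_lt (h : ∀ a ∈ A, |b| < |d - a|) : SameCut A (d + b) d := by
  intro a ha
  have hb := abs_le.1 (le_refl |b|)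
  rcases lt_abs.1 (h a ha) with hlt | hlt <;> constructor <;> constructor <;> intro <;> grind

theorem neg_mem_stab (hb : b ∈ Stab A d) : -b ∈ Stab A d := by
  have := (hb.2.add_right (A.neg_mem hb.1)).symm
  rw [add_neg_cancel_right] at this
  exact ⟨A.neg_mem hb.1, this⟩

theorem abs_mem_stab (hb : b ∈ Stab A d) : |b| ∈ Stab A d := by
  rcases abs_choice b with h | h <;> rw [h]
  exacts [hb, neg_mem_stab hb]

end Cut

namespace IsRamifier

variable {M : Type*} [AddCommGroup M] [LinearOrder M] [IsOrderedAddMonoid M] {A : AddSubgroup M}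
  {a b d : M}

theorem not_mem (h : IsRamifier A d a) : d ∉ A := fun hd =>
  h.2 ⟨d - a, A.sub_mem hd h.1, .refl _⟩

theorem of_deltaEq {d' a' : M} (h : IsRamifier A d a) (ha' : a' ∈ A)
    (hΔ : DeltaEq (d' - a') (d - a)) : IsRamifier A d' a' :=
  ⟨ha', fun ⟨c, hc, hc'⟩ => h.2 ⟨c, hc, (DeltaEq.trans ⟨hΔ.2, hΔ.1⟩ hc')⟩⟩

theorem not_deltaLe_of_mem_stab (h : IsRamifier A d a) (hb : b ∈ Stab A d) :
    ¬ DeltaLe (d - a) b := by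
  rintro ⟨n, hn⟩
  set c := |b|
  have hc := abs_mem_stab hb
  have hda := abs_le.1 hn
  -- Same cut keeps `d + (2n + 1) • c` below the bound `a + n • c ∈ A` of `d`, while `a ≤ d + n • c`.
  have hbound : d + (n + n + 1) • c ≤ a + n • c :=
    ((hc.2.add_nsmul hc.1 _ _ (A.add_mem h.1 (A.nsmul_mem hc.1 n))).2).2 (by grind)
  rw [add_nsmul, add_nsmul, one_nsmul] at hbound
  have hc0 : c ≤ 0 := by grind
  have hd : d = a := sub_eq_zero.1 (abs_nonpos_iff.1 (hn.trans (nsmul_nonpos hc0 n)))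
  exact h.not_mem (hd ▸ h.1)

theorem lt_abs_sub_of_not_deltaLe (h : IsRamifier A d a) (hb : ¬ DeltaLe (d - a) b)
    {a' : M} (ha' : a' ∈ A) : |b| < |d - a'| := by
  by_contra! hle
  have hfar : ¬ DeltaLe (a' - a) (d - a') := fun hle' => by
    have := (DeltaLe.add (.refl _) hle').trans (.of_abs_le hle)
    rw [sub_add_sub_cancel] at this
    exact hb this
  have hΔ := deltaEq_add_of_not_deltaLe hfar
  rw [sub_add_sub_cancel] at hΔ
  exact h.2 ⟨a' - a, A.sub_mem ha' h.1, hΔ⟩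

theorem mem_stab_iff (h : IsRamifier A d a) : b ∈ Stab A d ↔ b ∈ A ∧ ¬ DeltaLe (d - a) b :=
  ⟨fun hb => ⟨hb.1, h.not_deltaLe_of_mem_stab hb⟩, fun ⟨hbA, hb⟩ =>
    ⟨hbA, sameCut_add_of_forall_abs_lt fun _ ha' => h.lt_abs_sub_of_not_deltaLe hb ha'⟩⟩

theorem stab_eq_of_deltaEq {d' a' : M} (h : IsRamifier A d a) (h' : IsRamifier A d' a')
    (hΔ : DeltaEq (d' - a') (d - a)) : Stab A d' = Stab A d := by
  ext b
  rw [h'.mem_stab_iff, h.mem_stab_iff, hΔ.deltaLe_iff_left]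

end IsRamifier

theorem ramified_add_ramified_general (M : Type*) [AddCommGroup M] [LinearOrder M] [IsOrderedAddMonoid M]
    (A : AddSubgroup M)
    (d₁ d₂ a₁ a₂ : M)
    (h₁ : IsRamifier A d₁ a₁) (h₂ : IsRamifier A d₂ a₂)
    (hδ : DeltaLt (d₁ - a₁) (d₂ - a₂)) :
    Ramified A (d₁ + d₂) ∧
    IsRamifier A (d₁ + d₂) (a₁ + a₂) ∧
    DeltaEq ((d₁ + d₂) - (a₁ + a₂)) (d₂ - a₂) ∧
    Stab A (d₁ + d₂) = Stab A d₂ ∧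
    Gset A (d₁ + d₂) = Gset A d₂ := by
  have hΔ : DeltaEq ((d₁ + d₂) - (a₁ + a₂)) (d₂ - a₂) := by
    rw [add_sub_add_comm]
    exact deltaEq_add_of_not_deltaLe hδ.2
  have hram : IsRamifier A (d₁ + d₂) (a₁ + a₂) := h₂.of_deltaEq (A.add_mem h₁.1 h₂.1) hΔ
  have hstab : Stab A (d₁ + d₂) = Stab A d₂ := h₂.stab_eq_of_deltaEq hram hΔ
  have hG : Gset A (d₁ + d₂) = Gset A d₂ := by
    simp only [Gset, if_neg hram.not_mem, if_neg h₂.not_mem, hstab]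
  exact ⟨⟨a₁ + a₂, hram⟩, hram, hΔ, hstab, hG⟩

/-- If `d₁, d₂` are ramified over `A` with ramifiers `a₁, a₂`, `G(d₁/A) = G(d₂/A)`, and
`Δ(d₁ − a₁) < Δ(d₂ − a₂)`, then `d₁ + d₂` is ramified over `A` with ramifier `a₁ + a₂`,
`Δ((d₁ + d₂) − (a₁ + a₂)) = Δ(d₂ − a₂)`, and `Stab(d₁ + d₂/A) = Stab(d₂/A)`,
hence `G(d₁ + d₂/A) = G(d₂/A)`. -/
theorem ramified_add_ramified (M : Type*) [AddCommGroup M] [LinearOrder M] [IsOrderedAddMonoid M]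
    (hMdiv : ∀ x : M, ∀ n : ℕ, 0 < n → ∃ y : M, n • y = x)
    (A : AddSubgroup M)
    (hAdiv : ∀ a ∈ A, ∀ n : ℕ, 0 < n → ∃ b ∈ A, n • b = a)
    (d₁ d₂ a₁ a₂ : M)
    (h₁ : IsRamifier A d₁ a₁) (h₂ : IsRamifier A d₂ a₂)
    (hG : Gset A d₁ = Gset A d₂)
    (hδ : DeltaLt (d₁ - a₁) (d₂ - a₂)) :
    Ramified A (d₁ + d₂) ∧
    IsRamifier A (d₁ + d₂) (a₁ + a₂) ∧
    DeltaEq ((d₁ + d₂) - (a₁ + a₂)) (d₂ - a₂) ∧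
    Stab A (d₁ + d₂) = Stab A d₂ ∧
    Gset A (d₁ + d₂) = Gset A d₂ :=
  ramified_add_ramified_general M A d₁ d₂ a₁ a₂ h₁ h₂ hδ
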